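/- arXiv:cs/9901004 — 3 statements merged into one kernel-verified Lean document; each statement's English description precedes it below -/
import Mathlib

section
/- Let (Ω,d,μ) be a probability metric space with concentration function α, let X ⊆ Ω be a nonempty finite subset, let M > 0 be a median of the function d_X, let 0 < ε < 1, and assume that X is weakly (Mε/6)-homogeneous in Ω. Then for all query points x* ∈ Ω, apart from a set of measure at most 3·α(Mε/6)^{1/2}, the open ball of radius (1+ε)·d_X(x*) centred at x* contains at least min{|X|, ⌈(1/2)·α(Mε/6)^{−1/2}⌉} elements of X. -/
open MeasureTheory Metric ENNReal

/-- The concentration function of a probability metric space: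
`α(ε) = 1 - inf { μ(O_ε(A)) : A Borel, μ(A) ≥ 1/2 }`, where `O_ε(A)` is the
open `ε`-neighbourhood (thickening) of `A`. -/
noncomputable def concFn {Ω : Type*} [MetricSpace Ω] [MeasurableSpace Ω]
    (μ : Measure Ω) (ε : ℝ) : ℝ≥0∞ :=
  1 - ⨅ (A : Set Ω) (_ : MeasurableSet A) (_ : 1/2 ≤ μ A), μ (Metric.thickening ε A)

/-- `distToFinset X hX x = min_{y ∈ X} d(x,y)`, the distance from `x` to its
nearest neighbour in the nonempty finite set `X`. -/
noncomputable def distToFinset {Ω : Type*} [MetricSpace Ω]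
    (X : Finset Ω) (hX : X.Nonempty) (x : Ω) : ℝ :=
  X.inf' hX fun y => dist x y

/-- `Rrad μ x` is the supremum of the radii `r > 0` such that the open ball of
radius `r` centred at `x` has measure at most `1/2`. -/
noncomputable def Rrad {Ω : Type*} [MetricSpace Ω] [MeasurableSpace Ω]
    (μ : Measure Ω) (x : Ω) : ℝ :=
  sSup {r : ℝ | 0 < r ∧ μ (Metric.ball x r) ≤ 1/2}

/-- A finite set `X` is weakly `ε`-homogeneous in `Ω` if all the radii `R_x`,
`x ∈ X`, lie in an interval of length `< ε`, i.e. `R_x - R_y < ε` for all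
`x, y ∈ X`. -/
def WeaklyHomogeneous {Ω : Type*} [MetricSpace Ω] [MeasurableSpace Ω]
    (μ : Measure Ω) (ε : ℝ) (X : Finset Ω) : Prop :=
  ∀ x ∈ X, ∀ y ∈ X, Rrad μ x - Rrad μ y < ε

section Aux

variable {Ω : Type*} [MetricSpace Ω] [MeasurableSpace Ω] [BorelSpace Ω]
  (μ : Measure Ω) [IsProbabilityMeasure μ]

lemma half_le_compl {S : Set Ω} (hS : MeasurableSet S) (h : μ S ≤ 1/2) :
    1/2 ≤ μ Sᶜ := by
  rw [prob_compl_eq_one_sub hS]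
  have h2 := tsub_le_tsub_left h (1 : ℝ≥0∞)
  have h3 : (1:ℝ≥0∞) - 1/2 = 1/2 := by rw [one_div, ENNReal.one_sub_inv_two]
  rw [h3] at h2
  exact h2

lemma compl_thick_le_concFn (ε : ℝ) {A : Set Ω} (hA : MeasurableSet A)
    (h2 : 1/2 ≤ μ A) : μ ((Metric.thickening ε A)ᶜ) ≤ concFn μ ε := by
  have h1 : (⨅ (B : Set Ω) (_ : MeasurableSet B) (_ : 1/2 ≤ μ B),
      μ (Metric.thickening ε B)) ≤ μ (Metric.thickening ε A) :=
    iInf_le_of_le A (iInf_le_of_le hA (iInf_le _ h2))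
  rw [prob_compl_eq_one_sub Metric.isOpen_thickening.measurableSet, concFn]
  exact tsub_le_tsub_left h1 1

lemma le_concFn_of_thick_le_half (ε : ℝ) {A : Set Ω} (hA : MeasurableSet A)
    (h : μ (Metric.thickening ε A) ≤ 1/2) : μ A ≤ concFn μ ε := by
  have h2 : 1/2 ≤ μ ((Metric.thickening ε A)ᶜ) :=
    half_le_compl μ Metric.isOpen_thickening.measurableSet h
  have hsub : A ⊆ (Metric.thickening ε ((Metric.thickening ε A)ᶜ))ᶜ := by
    intro z hz hz2
    rw [Metric.mem_thickening_iff] at hz2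
    obtain ⟨w, hw, hd⟩ := hz2
    exact hw (Metric.mem_thickening_iff.2 ⟨z, hz, by rwa [dist_comm]⟩)
  exact (measure_mono hsub).trans
    (compl_thick_le_concFn μ ε Metric.isOpen_thickening.measurableSet.compl h2)

lemma half_le_thick_of_concFn_lt (ε : ℝ) {A : Set Ω} (hA : MeasurableSet A)
    (h : concFn μ ε < μ A) : 1/2 ≤ μ (Metric.thickening ε A) := by
  by_contra h'
  push_neg at h'
  exact absurd (le_concFn_of_thick_le_half μ ε hA h'.le) h.not_ge

omit [BorelSpace Ω] [IsProbabilityMeasure μ] in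
lemma concFn_ne_top (ε : ℝ) : concFn μ ε ≠ ⊤ := by
  have : concFn μ ε ≤ 1 := tsub_le_self
  exact (this.trans_lt ENNReal.one_lt_top).ne

end Aux

section DistAux

variable {Ω : Type*} [MetricSpace Ω] (X : Finset Ω) (hX : X.Nonempty)

lemma distToFinset_le (x : Ω) {y : Ω} (hy : y ∈ X) : distToFinset X hX x ≤ dist x y :=
  Finset.inf'_le _ hy

lemma exists_distToFinset (x : Ω) : ∃ y ∈ X, dist x y = distToFinset X hX x := by
  obtain ⟨y, hy, h⟩ := Finset.exists_mem_eq_inf' hX (fun y => dist x y)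
  exact ⟨y, hy, h.symm⟩

lemma distToFinset_triangle (x z : Ω) :
    distToFinset X hX x ≤ distToFinset X hX z + dist x z := by
  obtain ⟨y, hy, h⟩ := exists_distToFinset X hX z
  calc distToFinset X hX x ≤ dist x y := distToFinset_le X hX x hy
  _ ≤ dist x z + dist z y := dist_triangle x z y
  _ = distToFinset X hX z + dist x z := by rw [h]; ring

lemma continuous_distToFinset : Continuous (distToFinset X hX) := by
  have : LipschitzWith 1 (distToFinset X hX) := by
    apply LipschitzWith.of_dist_le_mul
    intro x z
    rw [Real.dist_eq, NNReal.coe_one, one_mul, abs_sub_le_iff]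
    constructor
    · have := distToFinset_triangle X hX x z
      linarith
    · have := distToFinset_triangle X hX z x
      rw [dist_comm] at this
      linarith
  exact this.continuous

end DistAux

lemma exists_blocks (G : ℕ → ℝ) (a : ℝ) (ha : 0 < a) (n : ℕ) (hn : 1 ≤ n) (m : ℕ)
    (hG0 : G 0 = 0) (hstep : ∀ i, G (i+1) ≤ G i + a)
    (hGn : ∀ ℓ, ℓ < m → ((2*ℓ+1 : ℕ) : ℝ) * a < G n) :
    ∃ I J : ℕ → ℕ,
      (∀ ℓ, ℓ < m → J ℓ ≤ I ℓ ∧ I ℓ ≤ n ∧ ((2*ℓ+1:ℕ):ℝ) * a < G (I ℓ) ∧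
        G (J ℓ) ≤ ((2*ℓ:ℕ):ℝ) * a) ∧
      (∀ ℓ ℓ', ℓ < ℓ' → ℓ' < m → I ℓ ≤ J ℓ') := by
  classical
  set P : ℕ → ℕ → Prop := fun ℓ i => ((2*ℓ+1:ℕ):ℝ) * a < G i ∨ n ≤ i with hP
  have hex : ∀ ℓ, ∃ i, P ℓ i := fun ℓ => ⟨n, Or.inr le_rfl⟩
  set I : ℕ → ℕ := fun ℓ => Nat.find (hex ℓ) with hI
  have hIle : ∀ ℓ, I ℓ ≤ n := fun ℓ => Nat.find_min' (hex ℓ) (Or.inr le_rfl)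
  have hIspec : ∀ ℓ, ℓ < m → ((2*ℓ+1:ℕ):ℝ) * a < G (I ℓ) := by
    intro ℓ hℓ
    rcases Nat.find_spec (hex ℓ) with h | h
    · exact h
    · have : I ℓ = n := le_antisymm (hIle ℓ) h
      rw [this]
      exact hGn ℓ hℓ
  have hImono : ∀ ℓ ℓ', ℓ ≤ ℓ' → I ℓ ≤ I ℓ' := by
    intro ℓ ℓ' h
    apply Nat.find_mono
    intro i hi
    rcases hi with h1 | h1
    · left
      refine lt_of_le_of_lt ?_ h1
      have hc' : (2*ℓ+1:ℕ) ≤ (2*ℓ'+1:ℕ) := by omega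
      have hc : ((2*ℓ+1:ℕ):ℝ) ≤ ((2*ℓ'+1:ℕ):ℝ) := Nat.cast_le.2 hc'
      exact mul_le_mul_of_nonneg_right hc ha.le
    · exact Or.inr h1
  have hImin : ∀ ℓ, ∀ i, i < I ℓ → ¬ P ℓ i := fun ℓ i h => Nat.find_min (hex ℓ) h
  have hIpos : ∀ ℓ, 1 ≤ I ℓ := by
    intro ℓ
    rcases Nat.eq_zero_or_pos (I ℓ) with h | h
    · exfalso
      have hspec := Nat.find_spec (hex ℓ)
      rw [show Nat.find (hex ℓ) = I ℓ from rfl, h] at hspec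
      rcases hspec with h1 | h1
      · rw [hG0] at h1
        have : (0:ℝ) < ((2*ℓ+1:ℕ):ℝ) * a := by positivity
        linarith
      · omega
    · exact h
  refine ⟨I, fun ℓ => if ℓ = 0 then 0 else I (ℓ-1), ?_, ?_⟩
  · intro ℓ hℓ
    refine ⟨?_, hIle ℓ, hIspec ℓ hℓ, ?_⟩
    · by_cases h0 : ℓ = 0
      · simp [h0]
      · simp only [h0, if_false]
        exact hImono _ _ (by omega)
    · by_cases h0 : ℓ = 0
      · simp [h0, hG0]
      · simp only [h0, if_false]
        set p := ℓ - 1 with hp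
        have hIp := hIpos p
        have hmin := hImin p (I p - 1) (by omega)
        simp only [hP, not_or, not_lt] at hmin
        obtain ⟨hG1, _⟩ := hmin
        have hstep' := hstep (I p - 1)
        rw [show I p - 1 + 1 = I p from by omega] at hstep'
        have hcast : ((2*ℓ:ℕ):ℝ) = ((2*p+1:ℕ):ℝ) + 1 := by
          push_cast
          have : ℓ = p + 1 := by omega
          rw [this]
          push_cast
          ring
        rw [hcast]
        calc G (I p) ≤ G (I p - 1) + a := hstep'
        _ ≤ ((2*p+1:ℕ):ℝ) * a + a := by linarith
        _ ≤ (((2*p+1:ℕ):ℝ) + 1) * a := by ring_nf; linarith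
  · intro ℓ ℓ' h hm
    have : ℓ' ≠ 0 := by omega
    simp only [this, if_false]
    exact hImono _ _ (by omega)

set_option maxHeartbeats 2000000 in
open scoped Classical in
/-- Main theorem: if `M > 0` is a median of `d_X`, `0 < ε < 1`, and `X` is weakly
`(Mε/6)`-homogeneous, then for all query points `x*` apart from a set of measure at
most `3·α(Mε/6)^{1/2}`, the open ball of radius `(1+ε)·d_X(x*)` centred at `x*`
contains at least `min {|X|, ⌈(1/2)·α(Mε/6)^{-1/2}⌉}` elements of `X`. -/
theorem main_theorem {Ω : Type*} [MetricSpace Ω] [MeasurableSpace Ω] [BorelSpace Ω]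
    (μ : Measure Ω) [IsProbabilityMeasure μ]
    (X : Finset Ω) (hX : X.Nonempty) (M : ℝ) (hM : 0 < M)
    (hM₁ : 1/2 ≤ μ {x | distToFinset X hX x ≤ M})
    (hM₂ : 1/2 ≤ μ {x | M ≤ distToFinset X hX x})
    (ε : ℝ) (hε₀ : 0 < ε) (hε₁ : ε < 1)
    (hhom : WeaklyHomogeneous μ (M * ε / 6) X) :
    μ {xq : Ω |
        (X.filter fun y => dist xq y < (1 + ε) * distToFinset X hX xq).card
          < min X.card ⌈(1/2) * (concFn μ (M * ε / 6)).toReal ^ (-(1/2) : ℝ)⌉₊}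
      ≤ ENNReal.ofReal (3 * (concFn μ (M * ε / 6)).toReal ^ ((1:ℝ)/2)) := by
  classical
  set δ := M * ε / 6 with hδdef
  have hδ : 0 < δ := by positivity
  set α := concFn μ δ with hαdef
  set a := α.toReal with hadef
  set t := a ^ ((1:ℝ)/2) with htdef
  set m := ⌈(1/2) * a ^ (-(1/2) : ℝ)⌉₊ with hmdef
  have ha_nonneg : 0 ≤ a := ENNReal.toReal_nonneg
  -- trivial case
  by_cases htriv : (1:ℝ)/9 ≤ a
  · have h1 : (1:ℝ) ≤ 3 * t := by
      have htsq : t * t = a := by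
        rw [htdef, ← Real.rpow_add (by linarith : (0:ℝ) < a)]
        norm_num
      have htnn : 0 ≤ t := Real.rpow_nonneg ha_nonneg _
      nlinarith
    calc μ _ ≤ 1 := prob_le_one
    _ = ENNReal.ofReal 1 := by rw [ENNReal.ofReal_one]
    _ ≤ ENNReal.ofReal (3 * t) := ENNReal.ofReal_le_ofReal h1
  push_neg at htriv
  rcases eq_or_lt_of_le ha_nonneg with ha0 | ha0
  · -- a = 0
    have hm0 : m = 0 := by
      rw [hmdef, ← ha0, Real.zero_rpow (by norm_num : (-(1/2):ℝ) ≠ 0), mul_zero, Nat.ceil_zero]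
    have hempty : {xq : Ω |
        (X.filter fun y => dist xq y < (1 + ε) * distToFinset X hX xq).card
          < min X.card m} = ∅ := by
      ext xq
      simp [hm0]
    rw [hempty, measure_empty]
    exact zero_le
  -- now 0 < a < 1/9
  have hu : a ^ (-(1/2):ℝ) * a = t := by
    have h1 : a ^ (-(1/2):ℝ) * a = a ^ ((-(1/2):ℝ) + 1) := by
      rw [Real.rpow_add ha0, Real.rpow_one]
    rw [h1, htdef]
    norm_num
  have htsq : t * t = a := by
    rw [htdef, ← Real.rpow_add ha0]
    norm_num
  have htpos : 0 < t := Real.rpow_pos_of_pos ha0 _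
  have ht3 : t ≤ 1/3 := by nlinarith
  have hm_le : (m:ℝ) ≤ (a ^ (-(1/2):ℝ))/2 + 1 := by
    have h0 : (0:ℝ) ≤ (1/2) * a ^ (-(1/2):ℝ) := by positivity
    have := Nat.ceil_lt_add_one h0
    rw [hmdef]
    push_cast
    linarith [this]
  have hm1 : 1 ≤ m := by
    rw [hmdef]
    apply Nat.one_le_iff_ne_zero.2
    apply Nat.ceil_pos.2 (by positivity) |>.ne'
  have hn1 : 1 ≤ X.card := Finset.card_pos.2 hX
  have hαtop : α ≠ ⊤ := concFn_ne_top μ δ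
  have hαre : α = ENNReal.ofReal a := (ENNReal.ofReal_toReal hαtop).symm
  have h12 : (1/2 : ℝ≥0∞) = ENNReal.ofReal (1/2) := by
    rw [ENNReal.ofReal_div_of_pos (by norm_num), ENNReal.ofReal_one]
    norm_num
  have hα_lt_half : α < 1/2 := by
    rw [hαre, h12]
    exact (ENNReal.ofReal_lt_ofReal_iff (by norm_num)).2 (by linarith)
  -- final real inequality
  have hfin : a + (m:ℝ) * a ≤ 3 * t := by
    have hma : (m:ℝ) * a ≤ ((a ^ (-(1/2):ℝ))/2 + 1) * a :=
      mul_le_mul_of_nonneg_right hm_le ha0.le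
    nlinarith [hma, hu, htsq, htpos, ht3]
  -- distToFinset facts
  have hdXle : ∀ x : Ω, ∀ y ∈ X, distToFinset X hX x ≤ dist x y :=
    fun x y hy => distToFinset_le X hX x hy
  have hdXtri : ∀ x z : Ω, distToFinset X hX x ≤ distToFinset X hX z + dist x z :=
    distToFinset_triangle X hX
  have hdXcont : Continuous (distToFinset X hX) := continuous_distToFinset X hX
  -- measure of low-distance queries
  have hBd : μ {x : Ω | distToFinset X hX x < M - δ} ≤ α := by
    have hA2meas : MeasurableSet {x : Ω | M ≤ distToFinset X hX x} := by
      have heq : {x : Ω | M ≤ distToFinset X hX x} = distToFinset X hX ⁻¹' Set.Ici M := rfl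
      rw [heq]
      exact hdXcont.measurable measurableSet_Ici
    have hsub : {x : Ω | distToFinset X hX x < M - δ} ⊆
        (Metric.thickening δ {x : Ω | M ≤ distToFinset X hX x})ᶜ := by
      intro z hz hz2
      rw [Metric.mem_thickening_iff] at hz2
      obtain ⟨w, hw, hd⟩ := hz2
      simp only [Set.mem_setOf_eq] at hz hw
      have h1 := hdXtri w z
      rw [dist_comm] at h1
      linarith
    exact (measure_mono hsub).trans
      (compl_thick_le_concFn μ δ hA2meas hM₂)
  -- geometry of s
  set s := (1+ε)*(M-δ) with hsdef
  have hMδpos : 0 < M - δ := by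
    rw [hδdef]
    have h6 : M*ε < M*1 := mul_lt_mul_of_pos_left hε₁ hM
    linarith
  have hs2 : M + 2*δ ≤ s := by
    rw [hsdef, hδdef]
    have h1 : 0 < M*ε := mul_pos hM hε₀
    have h2 : (M*ε)*ε ≤ (M*ε)*1 := mul_le_mul_of_nonneg_left hε₁.le h1.le
    nlinarith
  have hsx : ∀ x : Ω, M - δ ≤ distToFinset X hX x → s ≤ (1+ε) * distToFinset X hX x := by
    intro x h
    rw [hsdef]
    exact mul_le_mul_of_nonneg_left h (by linarith)
  -- main reduction
  suffices key : μ {xq : Ω |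
      (X.filter fun y => dist xq y < (1 + ε) * distToFinset X hX xq).card
        < min X.card m} ≤ α + (m:ℝ≥0∞) * α by
    refine key.trans ?_
    rw [hαre]
    have hcast : (m:ℝ≥0∞) * ENNReal.ofReal a = ENNReal.ofReal ((m:ℝ) * a) := by
      rw [← ENNReal.ofReal_natCast m, ← ENNReal.ofReal_mul (Nat.cast_nonneg m)]
    rw [hcast, ← ENNReal.ofReal_add ha_nonneg (by positivity)]
    exact ENNReal.ofReal_le_ofReal hfin
  by_cases hcase : ∃ y₀ ∈ X, 1/2 ≤ μ (Metric.ball y₀ (M + (2-ε)*δ))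
  · -- CASE A
    obtain ⟨y₀, hy₀X, hy₀⟩ := hcase
    have hb1 : μ ((Metric.ball y₀ (M + (3-ε)*δ))ᶜ) ≤ α := by
      have hsub : Metric.thickening δ (Metric.ball y₀ (M + (2-ε)*δ)) ⊆
          Metric.ball y₀ (M + (3-ε)*δ) := by
        intro z hz
        rw [Metric.mem_thickening_iff] at hz
        obtain ⟨w, hw, hd⟩ := hz
        rw [mem_ball] at hw ⊢
        have := dist_triangle z w y₀
        linarith
      exact (measure_mono (Set.compl_subset_compl.2 hsub)).trans
        (compl_thick_le_concFn μ δ measurableSet_ball hy₀)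
    have hnot : ∀ r, M + (3-ε)*δ ≤ r → ¬ (μ (Metric.ball y₀ r) ≤ 1/2) := by
      intro r hr hle
      have h1 : 1/2 ≤ μ ((Metric.ball y₀ r)ᶜ) := half_le_compl μ measurableSet_ball hle
      have h2 : μ ((Metric.ball y₀ r)ᶜ) ≤ μ ((Metric.ball y₀ (M + (3-ε)*δ))ᶜ) :=
        measure_mono (Set.compl_subset_compl.2 (Metric.ball_subset_ball hr))
      exact absurd (h1.trans (h2.trans hb1)) hα_lt_half.not_ge
    have hr₁nonneg : (0:ℝ) ≤ M + (3-ε)*δ := by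
      have hp : 0 < (3-ε)*δ := mul_pos (by linarith) hδ
      linarith
    have hR0 : Rrad μ y₀ ≤ M + (3-ε)*δ := by
      apply Real.sSup_le _ hr₁nonneg
      intro r hr
      obtain ⟨hrpos, hrle⟩ := hr
      by_contra hc
      push_neg at hc
      exact hnot r hc.le hrle
    have hvpos : (0:ℝ) < M + (4-ε)*δ := by
      have hp : 0 < (4-ε)*δ := mul_pos (by linarith) hδ
      linarith
    have hvball : ∀ y ∈ X, 1/2 ≤ μ (Metric.ball y (M + (4-ε)*δ)) := by
      intro y hy
      by_contra hle
      push_neg at hle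
      have hmem : (M + (4-ε)*δ) ∈ {r : ℝ | 0 < r ∧ μ (Metric.ball y r) ≤ 1/2} :=
        ⟨hvpos, hle.le⟩
      have hbdd : BddAbove {r : ℝ | 0 < r ∧ μ (Metric.ball y r) ≤ 1/2} := by
        refine ⟨M + (3-ε)*δ + dist y₀ y, ?_⟩
        intro r hr
        obtain ⟨hrpos, hrle⟩ := hr
        by_contra hc
        push_neg at hc
        have hsub : Metric.ball y₀ (M + (3-ε)*δ) ⊆ Metric.ball y r := by
          intro z hz
          rw [mem_ball] at hz ⊢
          have := dist_triangle z y₀ y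
          linarith
        exact hnot (M+(3-ε)*δ) le_rfl ((measure_mono hsub).trans hrle)
      have hle2 : M + (4-ε)*δ ≤ Rrad μ y := le_csSup hbdd hmem
      have hhy : Rrad μ y - Rrad μ y₀ < δ := hhom y hy y₀ hy₀X
      linarith
    have hsballc : ∀ y ∈ X, μ ((Metric.ball y s)ᶜ) ≤ α := by
      intro y hy
      have hsv : s = (M + (4-ε)*δ) + δ := by rw [hsdef, hδdef]; ring
      have hsub : Metric.thickening δ (Metric.ball y (M + (4-ε)*δ)) ⊆ Metric.ball y s := by
        intro z hz
        rw [Metric.mem_thickening_iff] at hz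
        obtain ⟨w, hw, hd⟩ := hz
        rw [mem_ball] at hw ⊢
        have := dist_triangle z w y
        rw [hsv]
        linarith
      exact (measure_mono (Set.compl_subset_compl.2 hsub)).trans
        (compl_thick_le_concFn μ δ measurableSet_ball (hvball y hy))
    -- counting / Markov
    set k := min X.card m with hk
    have hk1 : 1 ≤ k := le_min hn1 hm1
    have hkn : k ≤ X.card := min_le_left _ _
    set c := X.card - k + 1 with hc
    have hnkc : X.card ≤ k * c := by
      rw [hc]
      have h1 : X.card - k + k = X.card := Nat.sub_add_cancel hkn
      have h2 : 1 * (X.card - k) ≤ k * (X.card - k) :=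
        Nat.mul_le_mul_right _ hk1
      have h2' : X.card - k ≤ k * (X.card - k) := by
        rw [one_mul] at h2
        exact h2
      calc X.card = (X.card - k) + k := by omega
      _ ≤ k * (X.card - k) + k := Nat.add_le_add_right h2' k
      _ = k * (X.card - k + 1) := by ring
    set g : Ω → ℝ≥0∞ :=
      fun x => ∑ y ∈ X, Set.indicator {z : Ω | s ≤ dist z y} (fun _ => (1:ℝ≥0∞)) x with hg
    have hsets : ∀ y : Ω, {z : Ω | s ≤ dist z y} = (Metric.ball y s)ᶜ := by
      intro y
      ext z
      simp [Metric.mem_ball, not_lt]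
    have hsetmeas : ∀ y : Ω, MeasurableSet {z : Ω | s ≤ dist z y} := by
      intro y
      rw [hsets y]
      exact measurableSet_ball.compl
    have hgmeas : Measurable g := by
      apply Finset.measurable_sum
      intro y _
      exact Measurable.indicator measurable_const (hsetmeas y)
    have hgint : ∫⁻ x, g x ∂μ ≤ (X.card : ℝ≥0∞) * α := by
      rw [hg]
      rw [lintegral_finset_sum _ (fun y _ => Measurable.indicator measurable_const (hsetmeas y))]
      calc ∑ y ∈ X, ∫⁻ x, Set.indicator {z : Ω | s ≤ dist z y} (fun _ => (1:ℝ≥0∞)) x ∂μ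
          = ∑ y ∈ X, μ {z : Ω | s ≤ dist z y} := by
            apply Finset.sum_congr rfl
            intro y _
            exact lintegral_indicator_one (hsetmeas y)
      _ ≤ ∑ y ∈ X, α := by
            apply Finset.sum_le_sum
            intro y hy
            rw [hsets y]
            exact hsballc y hy
      _ = (X.card : ℝ≥0∞) * α := by
            rw [Finset.sum_const, nsmul_eq_mul]
    have hmarkov := mul_meas_ge_le_lintegral₀ (μ := μ) hgmeas.aemeasurable (c:ℝ≥0∞)
    have hB2 : μ {x : Ω | (c:ℝ≥0∞) ≤ g x} ≤ (k:ℝ≥0∞) * α := by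
      have hchain : (c:ℝ≥0∞) * μ {x : Ω | (c:ℝ≥0∞) ≤ g x} ≤ (c:ℝ≥0∞) * ((k:ℝ≥0∞) * α) := by
        refine (hmarkov.trans hgint).trans ?_
        have h1 : ((X.card:ℕ):ℝ≥0∞) ≤ ((k*c:ℕ):ℝ≥0∞) := Nat.cast_le.2 hnkc
        calc (X.card : ℝ≥0∞) * α ≤ ((k*c:ℕ):ℝ≥0∞) * α :=
              mul_le_mul_left h1 α
        _ = (c:ℝ≥0∞) * ((k:ℝ≥0∞) * α) := by push_cast; ring
      have hc0 : (c:ℝ≥0∞) ≠ 0 := Nat.cast_ne_zero.2 (by omega)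
      exact (ENNReal.mul_le_mul_iff_right hc0 (ENNReal.natCast_ne_top c)).1 hchain
    have hsubset : {xq : Ω |
        (X.filter fun y => dist xq y < (1 + ε) * distToFinset X hX xq).card
          < min X.card m} ⊆
        {x : Ω | distToFinset X hX x < M - δ} ∪ {x : Ω | (c:ℝ≥0∞) ≤ g x} := by
      intro x hx
      simp only [Set.mem_setOf_eq] at hx
      by_cases hxd : distToFinset X hX x < M - δ
      · exact Or.inl hxd
      · right
        push_neg at hxd
        have hgx : g x = ((X.filter fun y => s ≤ dist x y).card : ℝ≥0∞) := by
          rw [hg]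
          simp only [Set.indicator_apply, Set.mem_setOf_eq]
          rw [Finset.sum_boole]
        have hfsub : (X.filter fun y => dist x y < s) ⊆
            (X.filter fun y => dist x y < (1 + ε) * distToFinset X hX x) := by
          intro y hy
          rw [Finset.mem_filter] at hy ⊢
          exact ⟨hy.1, lt_of_lt_of_le hy.2 (hsx x hxd)⟩
        have h1 : (X.filter fun y => dist x y < s).card < k :=
          lt_of_le_of_lt (Finset.card_le_card hfsub) hx
        have h2 : (X.filter fun y => s ≤ dist x y).card
            = X.card - (X.filter fun y => dist x y < s).card := by
          have h3 := Finset.card_filter_add_card_filter_not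
            (s := X) (p := fun y => dist x y < s)
          have h4 : (X.filter fun y => ¬ dist x y < s)
              = (X.filter fun y => s ≤ dist x y) := by
            apply Finset.filter_congr
            intro y _
            simp [not_lt]
          rw [h4] at h3
          omega
        simp only [Set.mem_setOf_eq, hgx]
        refine Nat.cast_le.2 ?_
        omega
    refine (measure_mono hsubset).trans ?_
    refine (measure_union_le _ _).trans ?_
    exact add_le_add hBd
      (hB2.trans (mul_le_mul_left (Nat.cast_le.2 (min_le_right _ _)) α))
  · -- CASE B
    push_neg at hcase
    have hcb : ∀ y ∈ X, μ (Metric.closedBall y M) ≤ α := by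
      intro y hy
      have h2 : 1/2 ≤ μ ((Metric.ball y (M + (2-ε)*δ))ᶜ) :=
        half_le_compl μ measurableSet_ball (hcase y hy).le
      have hsub : Metric.closedBall y M ⊆
          (Metric.thickening δ ((Metric.ball y (M + (2-ε)*δ))ᶜ))ᶜ := by
        intro z hz hz2
        rw [Metric.mem_thickening_iff] at hz2
        obtain ⟨w, hw, hd⟩ := hz2
        rw [Metric.mem_closedBall] at hz
        apply hw
        rw [mem_ball]
        have ht := dist_triangle w z y
        rw [dist_comm w z] at ht
        have h1 : (0:ℝ) ≤ (1-ε)*δ := mul_nonneg (by linarith) hδ.le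
        linarith
      exact (measure_mono hsub).trans
        (compl_thick_le_concFn μ δ measurableSet_ball.compl h2)
    -- enumeration
    set ys : ℕ → Ω := fun j =>
      if h : j < X.card then ((X.equivFin.symm ⟨j, h⟩ : X) : Ω) else hX.choose with hys
    have hys_mem : ∀ j, ys j ∈ X := by
      intro j
      rw [hys]
      by_cases h : j < X.card
      · simp only [h, dif_pos]
        exact (X.equivFin.symm ⟨j, h⟩).2
      · simp only [h, dif_neg, not_false_iff]
        exact hX.choose_spec
    have hys_inj : ∀ i, i < X.card → ∀ j, j < X.card → ys i = ys j → i = j := by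
      intro i hi j hj h
      rw [hys] at h
      simp only [hi, hj, dif_pos] at h
      have h2 : X.equivFin.symm ⟨i, hi⟩ = X.equivFin.symm ⟨j, hj⟩ := Subtype.ext h
      have h3 := X.equivFin.symm.injective h2
      exact congrArg Fin.val h3
    have hys_surj : ∀ y ∈ X, ∃ j, j < X.card ∧ ys j = y := by
      intro y hy
      refine ⟨(X.equivFin ⟨y, hy⟩ : Fin X.card).1, (X.equivFin ⟨y, hy⟩).2, ?_⟩
      rw [hys]
      simp only [(X.equivFin ⟨y, hy⟩).2, dif_pos]
      have : (⟨(X.equivFin ⟨y, hy⟩).1, (X.equivFin ⟨y, hy⟩).2⟩ : Fin X.card)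
          = X.equivFin ⟨y, hy⟩ := rfl
      rw [this, Equiv.symm_apply_apply]
    set A := {x : Ω | distToFinset X hX x ≤ M} with hA
    have hAmeas : MeasurableSet A := by
      have heq : A = distToFinset X hX ⁻¹' Set.Iic M := rfl
      rw [heq]
      exact hdXcont.measurable measurableSet_Iic
    set U : ℕ → Set Ω := fun i => ⋃ j ∈ Finset.range i, Metric.closedBall (ys j) M with hU
    have hUmeas : ∀ i, MeasurableSet (U i) := by
      intro i
      apply Finset.measurableSet_biUnion
      intro j _
      exact measurableSet_closedBall
    have hAU : A ⊆ U X.card := by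
      intro x hx
      obtain ⟨y, hy, hyd⟩ := exists_distToFinset X hX x
      obtain ⟨j, hj, hjy⟩ := hys_surj y hy
      apply Set.mem_biUnion (Finset.mem_range.2 hj)
      rw [Metric.mem_closedBall, hjy, hyd]
      exact hx
    set G : ℕ → ℝ := fun i => (μ (A ∩ U i)).toReal with hG
    have hG0' : G 0 = 0 := by
      rw [hG]
      simp [hU]
    have hstep' : ∀ i, G (i+1) ≤ G i + a := by
      intro i
      have hUsucc : U (i+1) = Metric.closedBall (ys i) M ∪ U i := by
        rw [hU]
        simp only
        rw [Finset.range_add_one, Finset.set_biUnion_insert]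
      have hsub : A ∩ U (i+1) ⊆ (A ∩ U i) ∪ Metric.closedBall (ys i) M := by
        rw [hUsucc]
        intro z hz
        rcases hz.2 with h | h
        · exact Or.inr h
        · exact Or.inl ⟨hz.1, h⟩
      have hle : μ (A ∩ U (i+1)) ≤ μ (A ∩ U i) + α := by
        refine (measure_mono hsub).trans ?_
        refine (measure_union_le _ _).trans ?_
        exact add_le_add_right (hcb (ys i) (hys_mem i)) _
      have := ENNReal.toReal_mono
        (by exact ENNReal.add_ne_top.2 ⟨measure_ne_top μ _, hαtop⟩) hle
      rw [ENNReal.toReal_add (measure_ne_top μ _) hαtop] at this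
      exact this
    have hGcard : ∀ ℓ, ℓ < m → ((2*ℓ+1 : ℕ) : ℝ) * a < G X.card := by
      intro ℓ hℓ
      have hAeq : A ∩ U X.card = A := Set.inter_eq_self_of_subset_left hAU
      have h1 : (1/2 : ℝ) ≤ G X.card := by
        rw [hG]
        simp only [hAeq]
        have := ENNReal.toReal_mono (measure_ne_top μ A) hM₁
        rw [show ((1:ℝ≥0∞)/2).toReal = 1/2 by simp] at this
        exact this
      have h2 : ((2*ℓ+1 : ℕ) : ℝ) ≤ ((2*m-1 : ℕ) : ℝ) := Nat.cast_le.2 (by omega)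
      have h3 : ((2*m-1 : ℕ) : ℝ) ≤ 2*(m:ℝ) - 1 := by
        push_cast [Nat.cast_sub (by omega : 1 ≤ 2*m)]
        linarith
      have h4 : (2*(m:ℝ) - 1) * a ≤ (a ^ (-(1/2):ℝ) + 1) * a := by
        apply mul_le_mul_of_nonneg_right _ ha0.le
        linarith
      have h5 : (a ^ (-(1/2):ℝ) + 1) * a = t + a := by
        rw [add_mul, one_mul, hu]
      have h6 : ((2*ℓ+1 : ℕ) : ℝ) * a ≤ (2*(m:ℝ)-1) * a := by
        apply mul_le_mul_of_nonneg_right _ ha0.le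
        linarith
      nlinarith
    obtain ⟨I, J, hIJ, hsep⟩ := exists_blocks G a ha0 X.card hn1 m hG0' hstep' hGcard
    have hDmeas : ∀ ℓ, MeasurableSet ((A ∩ U (I ℓ)) \ U (J ℓ)) := by
      intro ℓ
      exact (hAmeas.inter (hUmeas _)).diff (hUmeas _)
    have hmass : ∀ ℓ, ℓ < m → α < μ ((A ∩ U (I ℓ)) \ U (J ℓ)) := by
      intro ℓ hℓ
      obtain ⟨hJI, hIn, hGI, hGJ⟩ := hIJ ℓ hℓ
      have hsub : A ∩ U (I ℓ) ⊆ ((A ∩ U (I ℓ)) \ U (J ℓ)) ∪ (A ∩ U (J ℓ)) := by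
        intro z hz
        by_cases hzJ : z ∈ U (J ℓ)
        · exact Or.inr ⟨hz.1, hzJ⟩
        · exact Or.inl ⟨hz, hzJ⟩
      have hle : μ (A ∩ U (I ℓ)) ≤ μ ((A ∩ U (I ℓ)) \ U (J ℓ)) + μ (A ∩ U (J ℓ)) :=
        (measure_mono hsub).trans (measure_union_le _ _)
      have h2 := ENNReal.toReal_mono
        (ENNReal.add_ne_top.2 ⟨measure_ne_top μ _, measure_ne_top μ _⟩) hle
      rw [ENNReal.toReal_add (measure_ne_top μ _) (measure_ne_top μ _)] at h2
      have h3 : a < (μ ((A ∩ U (I ℓ)) \ U (J ℓ))).toReal := by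
        have hGI' : ((2*ℓ+1:ℕ):ℝ) * a < (μ (A ∩ U (I ℓ))).toReal := hGI
        have hGJ' : (μ (A ∩ U (J ℓ))).toReal ≤ ((2*ℓ:ℕ):ℝ) * a := hGJ
        have hcast : ((2*ℓ+1:ℕ):ℝ) = ((2*ℓ:ℕ):ℝ) + 1 := by push_cast; ring
        nlinarith
      rw [hαre]
      exact (ENNReal.ofReal_lt_iff_lt_toReal ha_nonneg (measure_ne_top μ _)).2 h3
    have hEc : ∀ ℓ, ℓ < m →
        μ ((⋃ j ∈ Finset.Ico (J ℓ) (I ℓ), Metric.ball (ys j) (M + 2*δ))ᶜ) ≤ α := by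
      intro ℓ hℓ
      have h1 : 1/2 ≤ μ (Metric.thickening δ ((A ∩ U (I ℓ)) \ U (J ℓ))) := by
        apply half_le_thick_of_concFn_lt μ δ (hDmeas ℓ)
        rw [← hαdef]
        exact hmass ℓ hℓ
      have h2 : μ ((Metric.thickening δ (Metric.thickening δ ((A ∩ U (I ℓ)) \ U (J ℓ))))ᶜ) ≤ α :=
        compl_thick_le_concFn μ δ Metric.isOpen_thickening.measurableSet h1
      have h3 : Metric.thickening δ (Metric.thickening δ ((A ∩ U (I ℓ)) \ U (J ℓ))) ⊆
          ⋃ j ∈ Finset.Ico (J ℓ) (I ℓ), Metric.ball (ys j) (M + 2*δ) := by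
        intro z hz
        rw [Metric.mem_thickening_iff] at hz
        obtain ⟨w₁, hw₁, hd1⟩ := hz
        rw [Metric.mem_thickening_iff] at hw₁
        obtain ⟨w, hw, hd2⟩ := hw₁
        obtain ⟨⟨hwA, hwU⟩, hwJ⟩ := hw
        rw [hU] at hwU
        simp only [Set.mem_iUnion, exists_prop, Finset.mem_range] at hwU
        obtain ⟨j, hjI, hjd⟩ := hwU
        have hjJ : J ℓ ≤ j := by
          by_contra hc
          push_neg at hc
          apply hwJ
          rw [hU]
          exact Set.mem_biUnion (Finset.mem_range.2 hc) hjd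
        apply Set.mem_biUnion (Finset.mem_Ico.2 ⟨hjJ, hjI⟩)
        rw [mem_ball]
        rw [Metric.mem_closedBall] at hjd
        have t1 := dist_triangle z w₁ (ys j)
        have t2 := dist_triangle w₁ w (ys j)
        linarith
      exact (measure_mono (Set.compl_subset_compl.2 h3)).trans h2
    have hsubset : {xq : Ω |
        (X.filter fun y => dist xq y < (1 + ε) * distToFinset X hX xq).card
          < min X.card m} ⊆
        {x : Ω | distToFinset X hX x < M - δ} ∪
          ⋃ ℓ ∈ Finset.range m, (⋃ j ∈ Finset.Ico (J ℓ) (I ℓ),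
            Metric.ball (ys j) (M + 2*δ))ᶜ := by
      intro x hx
      simp only [Set.mem_setOf_eq] at hx
      by_cases hxd : distToFinset X hX x < M - δ
      · exact Or.inl hxd
      · push_neg at hxd
        by_cases hS2 : x ∈ ⋃ ℓ ∈ Finset.range m, (⋃ j ∈ Finset.Ico (J ℓ) (I ℓ),
            Metric.ball (ys j) (M + 2*δ))ᶜ
        · exact Or.inr hS2
        · exfalso
          have hEx : ∀ ℓ, ℓ < m → ∃ j, (J ℓ ≤ j ∧ j < I ℓ) ∧ dist x (ys j) < M + 2*δ := by
            intro ℓ hℓ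
            have hxe : x ∈ ⋃ j ∈ Finset.Ico (J ℓ) (I ℓ), Metric.ball (ys j) (M + 2*δ) := by
              by_contra hxe
              exact hS2 (Set.mem_biUnion (Finset.mem_range.2 hℓ) hxe)
            simp only [Set.mem_iUnion, exists_prop, Finset.mem_Ico, mem_ball] at hxe
            obtain ⟨j, hj1, hj2⟩ := hxe
            exact ⟨j, hj1, hj2⟩
          choose! jfun hj1 hj2 using hEx
          have hcard : m ≤ (X.filter fun y =>
              dist x y < (1 + ε) * distToFinset X hX x).card := by
            have := Finset.card_le_card_of_injOn (f := fun ℓ => ys (jfun ℓ))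
              (s := Finset.range m)
              (t := X.filter fun y => dist x y < (1 + ε) * distToFinset X hX x)
              ?_ ?_
            · simpa using this
            · intro ℓ hℓ
              rw [Finset.mem_coe, Finset.mem_range] at hℓ
              rw [Finset.mem_coe, Finset.mem_filter]
              refine ⟨hys_mem _, ?_⟩
              have hd := hj2 ℓ hℓ
              have : M + 2*δ ≤ (1+ε) * distToFinset X hX x := hs2.trans (hsx x hxd)
              linarith
            · intro ℓ hℓ ℓ' hℓ' heq
              rw [Finset.coe_range, Set.mem_Iio] at hℓ hℓ'
              by_contra hne
              have hjlt : ∀ p, p < m → jfun p < X.card := by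
                intro p hp
                exact lt_of_lt_of_le (hj1 p hp).2 ((hIJ p hp).2.1)
              have heqj : jfun ℓ = jfun ℓ' :=
                hys_inj _ (hjlt ℓ hℓ) _ (hjlt ℓ' hℓ') heq
              rcases lt_trichotomy ℓ ℓ' with h | h | h
              · have := hsep ℓ ℓ' h hℓ'
                have h1 := (hj1 ℓ hℓ).2
                have h2 := (hj1 ℓ' hℓ').1
                omega
              · exact hne h
              · have := hsep ℓ' ℓ h hℓ
                have h1 := (hj1 ℓ' hℓ').2
                have h2 := (hj1 ℓ hℓ).1
                omega
          have : min X.card m ≤ m := min_le_right _ _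
          omega
    refine (measure_mono hsubset).trans ?_
    refine (measure_union_le _ _).trans ?_
    refine add_le_add hBd ?_
    refine (measure_biUnion_finset_le _ _).trans ?_
    refine (Finset.sum_le_sum (fun ℓ hℓ => hEc ℓ (Finset.mem_range.1 hℓ))).trans ?_
    rw [Finset.sum_const, Finset.card_range, nsmul_eq_mul]
end

section
/- Let (Ω,d,μ) be a probability metric space with concentration function α, let X ⊆ Ω be a nonempty finite subset, let M > 0 be a median of d_X, let 0 < ε < 1, assume X is weakly (Mε/6)-homogeneous in Ω, and assume moreover that |X| ≤ (1/2)·α(Mε/6)^{−1/2}. Then for all query points x* ∈ Ω, apart from a set of measure at most 3·α(Mε/6)^{1/2}, every point of X lies at distance less than (1+ε)·d_X(x*) from x*; that is, the similarity query centred at x* is ε-unstable in the strong sense that the open ball of radius (1+ε)·d_X(x*) centred at x* contains all of X. -/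
open MeasureTheory Metric ENNReal

set_option linter.unusedSectionVars false

section Aux
variable {Ω : Type*} [MetricSpace Ω] [MeasurableSpace Ω] [BorelSpace Ω]
  (μ : Measure Ω) [IsProbabilityMeasure μ]

lemma RradSet_bddAbove (x : Ω) :
    BddAbove {r : ℝ | 0 < r ∧ μ (ball x r) ≤ 1/2} := by
  obtain ⟨n, hn⟩ : ∃ n : ℕ, (1/2 : ℝ≥0∞) < μ (ball x n) := by
    by_contra h
    push_neg at h
    have hmono : Monotone fun n : ℕ => ball x (n : ℝ) := fun a b hab =>
      ball_subset_ball (by exact_mod_cast hab)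
    have h1 := (hmono.directed_le).measure_iUnion (μ := μ)
    rw [iUnion_ball_nat] at h1
    have h2 : μ (Set.univ : Set Ω) ≤ 1/2 := h1 ▸ iSup_le h
    rw [measure_univ] at h2
    exact absurd h2 (by norm_num)
  refine ⟨n, fun r hr => ?_⟩
  by_contra hr'
  push_neg at hr'
  exact absurd (le_trans (measure_mono (ball_subset_ball hr'.le)) hr.2) (not_le.mpr hn)

lemma Rrad_nonneg (x : Ω) : 0 ≤ Rrad μ x :=
  Real.sSup_nonneg fun _ hr => hr.1.le

lemma measure_ball_Rrad (x : Ω) : μ (ball x (Rrad μ x)) ≤ 1/2 := by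
  have hb : ball x (Rrad μ x) = ⋃ n : ℕ, ball x (Rrad μ x - 1/(n+1)) := by
    ext ω
    simp only [Set.mem_iUnion, mem_ball]
    constructor
    · intro h
      obtain ⟨n, hn⟩ := exists_nat_one_div_lt (sub_pos.mpr h)
      exact ⟨n, by linarith⟩
    · rintro ⟨n, hn⟩
      have hpos : (0:ℝ) < 1/(n+1) := by positivity
      linarith
  rw [hb]
  have hmono : Monotone fun n : ℕ => ball x (Rrad μ x - 1/(n+1)) := by
    intro p q hpq
    apply ball_subset_ball
    have h1 : (1:ℝ)/(q+1) ≤ 1/(p+1) := by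
      apply one_div_le_one_div_of_le (by positivity)
      exact_mod_cast add_le_add_left (Nat.cast_le.mpr hpq) 1
    linarith
  rw [hmono.directed_le.measure_iUnion]
  refine iSup_le fun n => ?_
  rcases le_or_gt (Rrad μ x - 1/(n+1)) 0 with h | h
  · rw [ball_eq_empty.mpr h]; simp
  · have hpos : (0:ℝ) < 1/(n+1) := by positivity
    have hlt : Rrad μ x - 1/(n+1) < Rrad μ x := by linarith
    have hne : {r : ℝ | 0 < r ∧ μ (ball x r) ≤ 1/2}.Nonempty := by
      by_contra hemp
      rw [Set.not_nonempty_iff_eq_empty] at hemp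
      have h0 : Rrad μ x = 0 := by rw [Rrad, hemp, Real.sSup_empty]
      rw [h0] at h
      linarith
    obtain ⟨s, hs, hrs⟩ := exists_lt_of_lt_csSup hne hlt
    exact le_trans (measure_mono (ball_subset_ball hrs.le)) hs.2

lemma measure_ball_gt' {x : Ω} {r : ℝ} (h : Rrad μ x < r) : 1/2 < μ (ball x r) := by
  have hr : 0 < r := lt_of_le_of_lt (Rrad_nonneg μ x) h
  by_contra hc
  push_neg at hc
  have hmem : r ∈ {r : ℝ | 0 < r ∧ μ (ball x r) ≤ 1/2} := ⟨hr, hc⟩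
  have h2 : r ≤ Rrad μ x := le_csSup (RradSet_bddAbove μ x) hmem
  linarith

lemma measure_closedBall_Rrad (x : Ω) : 1/2 ≤ μ (closedBall x (Rrad μ x)) := by
  have hb : closedBall x (Rrad μ x) = ⋂ n : ℕ, ball x (Rrad μ x + 1/(n+1)) := by
    ext ω
    simp only [Set.mem_iInter, mem_closedBall, mem_ball]
    constructor
    · intro h n
      have hpos : (0:ℝ) < 1/(n+1) := by positivity
      linarith
    · intro h
      by_contra hc
      push_neg at hc
      obtain ⟨n, hn⟩ := exists_nat_one_div_lt (sub_pos.mpr hc)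
      have := h n
      linarith
  rw [hb]
  have hanti : Antitone fun n : ℕ => ball x (Rrad μ x + 1/(n+1)) := by
    intro p q hpq
    apply ball_subset_ball
    have h1 : (1:ℝ)/(q+1) ≤ 1/(p+1) := by
      apply one_div_le_one_div_of_le (by positivity)
      exact_mod_cast add_le_add_left (Nat.cast_le.mpr hpq) 1
    linarith
  rw [hanti.directed_ge.measure_iInter (fun n => measurableSet_ball.nullMeasurableSet)
    ⟨0, measure_ne_top μ _⟩]
  refine le_iInf fun n => ?_
  refine (measure_ball_gt' μ ?_).le
  have hpos : (0:ℝ) < 1/(n+1) := by positivity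
  linarith
lemma le_concFn {δ : ℝ} {A : Set Ω} (hA : MeasurableSet A) (h : 1/2 ≤ μ A) :
    1 - μ (thickening δ A) ≤ concFn μ δ := by
  refine tsub_le_tsub_left ?_ 1
  exact iInf_le_of_le A (iInf_le_of_le hA (iInf_le _ h))

lemma concFn_thickening {δ : ℝ} {A : Set Ω} (hA : MeasurableSet A) (h : 1/2 ≤ μ A) :
    1 - concFn μ δ ≤ μ (thickening δ A) := by
  have h1 := le_concFn μ hA h (δ := δ)
  rw [tsub_le_iff_right] at h1 ⊢
  rwa [add_comm]

lemma measure_compl_ball_le_aux {δ : ℝ} (x : Ω) (R : ℝ)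
    (hcb : 1/2 ≤ μ (closedBall x R)) :
    μ (ball x (R + δ))ᶜ ≤ concFn μ δ := by
  have h1 : thickening δ (closedBall x R) ⊆ ball x (R + δ) := by
    intro ω hω
    rw [mem_thickening_iff] at hω
    obtain ⟨z, hz, hd⟩ := hω
    rw [mem_ball]
    have hzx : dist z x ≤ R := mem_closedBall.mp hz
    calc dist ω x ≤ dist ω z + dist z x := dist_triangle ω z x
      _ < R + δ := by linarith
  have h2 : 1 - concFn μ δ ≤ μ (ball x (R + δ)) :=
    le_trans (concFn_thickening μ measurableSet_closedBall hcb) (measure_mono h1)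
  rw [prob_compl_eq_one_sub measurableSet_ball]
  rw [tsub_le_iff_right]
  rw [tsub_le_iff_right] at h2
  rwa [add_comm]

lemma measure_closedBall_sub_le_aux {δ : ℝ} (x : Ω) (R : ℝ)
    (hb : μ (ball x R) ≤ 1/2) :
    μ (closedBall x (R - δ)) ≤ concFn μ δ := by
  set B := closedBall x (R - δ) with hB
  set A := (thickening δ B)ᶜ with hA
  have hthickB : thickening δ B ⊆ ball x R := by
    intro ω hω
    rw [mem_thickening_iff] at hω
    obtain ⟨z, hz, hd⟩ := hω
    rw [mem_ball]
    have hzx : dist z x ≤ R - δ := mem_closedBall.mp hz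
    calc dist ω x ≤ dist ω z + dist z x := dist_triangle ω z x
      _ < R := by linarith
  have hAmeas : MeasurableSet A := isOpen_thickening.measurableSet.compl
  have hAhalf : 1/2 ≤ μ A := by
    rw [hA, prob_compl_eq_one_sub isOpen_thickening.measurableSet]
    have hth : μ (thickening δ B) ≤ 1/2 := le_trans (measure_mono hthickB) hb
    calc (1:ℝ≥0∞)/2 = 1 - 1/2 := by rw [ENNReal.sub_half one_ne_top]
      _ ≤ 1 - μ (thickening δ B) := tsub_le_tsub_left hth 1
  have hsub : B ⊆ (thickening δ A)ᶜ := by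
    intro b hb' hmem
    rw [mem_thickening_iff] at hmem
    obtain ⟨a, ha, hd⟩ := hmem
    exact ha (mem_thickening_iff.mpr ⟨b, hb', by rwa [dist_comm]⟩)
  calc μ B ≤ μ (thickening δ A)ᶜ := measure_mono hsub
    _ = 1 - μ (thickening δ A) := prob_compl_eq_one_sub isOpen_thickening.measurableSet
    _ ≤ concFn μ δ := le_concFn μ hAmeas hAhalf

lemma measure_compl_ball_le {δ : ℝ} (x : Ω) :
    μ (ball x (Rrad μ x + δ))ᶜ ≤ concFn μ δ :=
  measure_compl_ball_le_aux μ x (Rrad μ x) (measure_closedBall_Rrad μ x)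

lemma measure_closedBall_sub_le {δ : ℝ} (x : Ω) :
    μ (closedBall x (Rrad μ x - δ)) ≤ concFn μ δ :=
  measure_closedBall_sub_le_aux μ x (Rrad μ x) (measure_ball_Rrad μ x)

end Aux

/-- If moreover `|X| ≤ (1/2)·α(Mε/6)^{-1/2}`, then for all query points `x*` apart
from a set of measure at most `3·α(Mε/6)^{1/2}`, every point of `X` lies at
distance less than `(1+ε)·d_X(x*)` from `x*`. -/
theorem query_instability {Ω : Type*} [MetricSpace Ω] [MeasurableSpace Ω] [BorelSpace Ω]
    (μ : Measure Ω) [IsProbabilityMeasure μ]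
    (X : Finset Ω) (hX : X.Nonempty) (M : ℝ) (hM : 0 < M)
    (hM₁ : 1/2 ≤ μ {x | distToFinset X hX x ≤ M})
    (hM₂ : 1/2 ≤ μ {x | M ≤ distToFinset X hX x})
    (ε : ℝ) (hε₀ : 0 < ε) (hε₁ : ε < 1)
    (hhom : WeaklyHomogeneous μ (M * ε / 6) X)
    (hcard : (X.card : ℝ) ≤ (1/2) * (concFn μ (M * ε / 6)).toReal ^ (-(1/2) : ℝ)) :
    μ {xq : Ω | ¬ ∀ x ∈ X, dist xq x < (1 + ε) * distToFinset X hX xq}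
      ≤ ENNReal.ofReal (3 * (concFn μ (M * ε / 6)).toReal ^ ((1:ℝ)/2)) := by
  set δ := M * ε / 6 with hδdef
  have hδ : 0 < δ := by positivity
  set a := (concFn μ δ).toReal with hadef
  by_cases hbig : (1:ℝ)/3 ≤ a ^ ((1:ℝ)/2)
  · calc μ _ ≤ 1 := prob_le_one
      _ ≤ ENNReal.ofReal (3 * a ^ ((1:ℝ)/2)) := by
          rw [ENNReal.one_le_ofReal]
          linarith
  push_neg at hbig
  have hcard1 : (1:ℝ) ≤ X.card := by exact_mod_cast hX.card_pos
  have hapos : 0 < a := by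
    rcases lt_or_eq_of_le (ENNReal.toReal_nonneg (a := concFn μ δ)) with h | h
    · exact h
    · rw [hadef, ← h, Real.zero_rpow (by norm_num)] at hcard
      linarith
  have haroot : 0 ≤ a ^ ((1:ℝ)/2) := Real.rpow_nonneg hapos.le _
  have hsq : a ^ ((1:ℝ)/2) * a ^ ((1:ℝ)/2) = a := by
    rw [← Real.rpow_add hapos]; norm_num
  have hasmall : a < 1/9 := by nlinarith
  have hconc_ne_top : concFn μ δ ≠ ⊤ := by
    have : concFn μ δ ≤ 1 := tsub_le_self
    exact (this.trans_lt one_lt_top).ne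
  have hconc_eq : concFn μ δ = ENNReal.ofReal a := (ENNReal.ofReal_toReal hconc_ne_top).symm
  have hhalf : (1/2 : ℝ≥0∞) = ENNReal.ofReal (1/2 : ℝ) := by
    rw [ENNReal.ofReal_div_of_pos (by norm_num), ENNReal.ofReal_one, ENNReal.ofReal_ofNat]
  have hconc_lt_half : concFn μ δ < 1/2 := by
    rw [hconc_eq, hhalf]
    rw [ENNReal.ofReal_lt_ofReal_iff (by norm_num)]
    linarith
  obtain ⟨x₀, hx₀X, hx₀⟩ := X.exists_mem_eq_inf' hX (Rrad μ)
  have hRmin : ∀ y ∈ X, Rrad μ x₀ ≤ Rrad μ y := fun y hy => hx₀ ▸ Finset.inf'_le _ hy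
  set R := Rrad μ x₀ with hRdef
  have hMR : M < R + δ := by
    by_contra hc
    push_neg at hc
    have hsub : {x | M ≤ distToFinset X hX x} ⊆ (ball x₀ (Rrad μ x₀ + δ))ᶜ := by
      intro ω hω
      simp only [Set.mem_compl_iff, mem_ball, not_lt]
      have h1 : distToFinset X hX ω ≤ dist ω x₀ := Finset.inf'_le _ hx₀X
      have h2 : M ≤ distToFinset X hX ω := hω
      linarith
    have h3 := le_trans hM₂ (le_trans (measure_mono hsub) (measure_compl_ball_le μ x₀ (δ := δ)))
    exact absurd h3 (not_le.mpr hconc_lt_half)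
  set Bad := ⋃ x ∈ X, ((ball x (Rrad μ x + δ))ᶜ ∪ closedBall x (Rrad μ x - δ)) with hBad
  have hgoal_sub : {xq : Ω | ¬ ∀ x ∈ X, dist xq x < (1 + ε) * distToFinset X hX xq} ⊆ Bad := by
    intro ω hω
    simp only [Set.mem_setOf_eq] at hω
    by_contra hωB
    apply hω
    have hgood : ∀ x ∈ X, Rrad μ x - δ < dist ω x ∧ dist ω x < Rrad μ x + δ := by
      intro x hx
      have hnot : ω ∉ (ball x (Rrad μ x + δ))ᶜ ∪ closedBall x (Rrad μ x - δ) :=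
        fun hmem => hωB (Set.mem_biUnion hx hmem)
      simp only [Set.mem_union, Set.mem_compl_iff, mem_ball, mem_closedBall, not_or,
        not_not, not_le] at hnot
      exact ⟨hnot.2, hnot.1⟩
    intro x hx
    obtain ⟨y₀, hy₀X, hy₀⟩ := X.exists_mem_eq_inf' hX (fun y => dist ω y)
    have hdX : distToFinset X hX ω = dist ω y₀ := hy₀
    have h1 : R - δ < distToFinset X hX ω := by
      have hg := (hgood y₀ hy₀X).1
      have hR : R ≤ Rrad μ y₀ := hRmin y₀ hy₀X
      rw [hdX]; linarith
    have h2 : dist ω x < R + 2*δ := by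
      have hg := (hgood x hx).2
      have hh : Rrad μ x - Rrad μ x₀ < δ := hhom x hx x₀ hx₀X
      linarith
    have h3 : R + 2*δ ≤ (1+ε) * (R - δ) := by
      nlinarith [mul_lt_mul_of_pos_left hMR hε₀, mul_pos hM hε₀,
        mul_nonneg (mul_pos hM hε₀).le (sub_nonneg.mpr hε₁.le)]
    have h4 : (1+ε)*(R-δ) < (1+ε)*distToFinset X hX ω :=
      mul_lt_mul_of_pos_left h1 (by linarith)
    linarith
  refine le_trans (measure_mono hgoal_sub) ?_
  have hBadle : μ Bad ≤ ∑ x ∈ X, μ ((ball x (Rrad μ x + δ))ᶜ ∪ closedBall x (Rrad μ x - δ)) :=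
    measure_biUnion_finset_le X _
  have hterm : ∀ x ∈ X, μ ((ball x (Rrad μ x + δ))ᶜ ∪ closedBall x (Rrad μ x - δ))
      ≤ concFn μ δ + concFn μ δ := fun x _ =>
    le_trans (measure_union_le _ _)
      (add_le_add (measure_compl_ball_le μ x) (measure_closedBall_sub_le μ x))
  have hBad2 : μ Bad ≤ X.card • (concFn μ δ + concFn μ δ) :=
    hBadle.trans (Finset.sum_le_card_nsmul X _ _ hterm)
  refine hBad2.trans ?_
  rw [nsmul_eq_mul, hconc_eq, ← ENNReal.ofReal_add hapos.le hapos.le,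
    ← ENNReal.ofReal_natCast, ← ENNReal.ofReal_mul (Nat.cast_nonneg _)]
  apply ENNReal.ofReal_le_ofReal
  have hkey : a * a ^ (-(1/2) : ℝ) = a ^ ((1:ℝ)/2) := by
    nth_rewrite 1 [← Real.rpow_one a]
    rw [← Real.rpow_add hapos]; norm_num
  have h5 : a * (X.card:ℝ) ≤ a * ((1/2) * a ^ (-(1/2) : ℝ)) :=
    mul_le_mul_of_nonneg_left hcard hapos.le
  nlinarith [h5, hkey, haroot]
end

section
/- Let (Ω,d) be a metric space, let δ > 0, and let X ⊆ Ω be a nonempty finite subset that is maximally δ-separated: every two distinct elements of X are at distance greater than δ from each other, and every point of Ω is at distance at most δ from some point of X. If x* and y* are two points of Ω such that the similarity query at each of them is 1-unstable, i.e. |{x ∈ X : d(x*,x) ≤ 2·d_X(x*)}| > |X|/2 and |{x ∈ X : d(y*,x) ≤ 2·d_X(y*)}| > |X|/2, then d(x*,y*) ≤ 4δ; consequently, the set of centres of all 1-unstable queries is contained in a ball of radius 4δ. -/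
open Metric

open scoped Classical in
/-- If `X` is maximally `δ`-separated (distinct points of `X` are more than `δ`
apart, and every point of `Ω` is within `δ` of `X`), and the similarity queries at
`x*` and `y*` are both 1-unstable, then `d(x*, y*) ≤ 4δ`. -/
theorem unstable_queries_close {Ω : Type*} [MetricSpace Ω]
    (δ : ℝ) (hδ : 0 < δ) (X : Finset Ω) (hX : X.Nonempty)
    (hsep : ∀ x ∈ X, ∀ y ∈ X, x ≠ y → δ < dist x y)
    (hmax : ∀ z : Ω, ∃ x ∈ X, dist z x ≤ δ)
    (xq yq : Ω)
    (hx : X.card <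
      2 * (X.filter fun x => dist xq x ≤ 2 * distToFinset X hX xq).card)
    (hy : X.card <
      2 * (X.filter fun x => dist yq x ≤ 2 * distToFinset X hX yq).card) :
    dist xq yq ≤ 4 * δ := by
  set A := X.filter fun x => dist xq x ≤ 2 * distToFinset X hX xq with hA
  set B := X.filter fun x => dist yq x ≤ 2 * distToFinset X hX yq with hB
  -- distToFinset ≤ δ for any point
  have hdx : ∀ z : Ω, distToFinset X hX z ≤ δ := by
    intro z
    obtain ⟨x, hxX, hxd⟩ := hmax z
    exact le_trans (Finset.inf'_le _ hxX) hxd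
  -- A ∩ B nonempty
  have hsub : A ∪ B ⊆ X := by
    apply Finset.union_subset <;> exact Finset.filter_subset _ _
  have hcard : A.card + B.card = (A ∪ B).card + (A ∩ B).card :=
    (Finset.card_union_add_card_inter A B).symm
  have hABpos : 0 < (A ∩ B).card := by
    have h1 : (A ∪ B).card ≤ X.card := Finset.card_le_card hsub
    omega
  obtain ⟨x, hxAB⟩ := Finset.card_pos.mp hABpos
  have hxA := (Finset.mem_filter.mp (Finset.mem_inter.mp hxAB).1).2
  have hxB := (Finset.mem_filter.mp (Finset.mem_inter.mp hxAB).2).2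
  calc dist xq yq ≤ dist xq x + dist yq x := dist_triangle_right _ _ _
    _ ≤ 2 * distToFinset X hX xq + 2 * distToFinset X hX yq := add_le_add hxA hxB
    _ ≤ 2 * δ + 2 * δ := by
        have := hdx xq; have := hdx yq; linarith
    _ = 4 * δ := by ring
end
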